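/- Let K be a real quadratic field, σ the nontrivial element of Gal(K/Q), and x ∈ K^*. Then H_K(x) is rational if and only if max{|x|, |σ(x)|} ≤ 1 or min{|x|, |σ(x)|} ≥ 1; moreover, whenever H_K(x) is rational it is an integer. -/

import Mathlib

open NumberField IsDedekindDomain Real
open scoped nonZeroDivisors Classical

variable (K : Type*) [Field K] [NumberField K]

/-- The normalized `v`-adic absolute value `|x|_v^{n_v} = N(v)^{-ord_v(x)}` at a finite place. -/
noncomputable def vadicAbs (v : HeightOneSpectrum (𝓞 K)) (x : K) : ℝ :=
  if hx : v.valuation K x = 0 then 0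
  else (Ideal.absNorm v.asIdeal : ℝ) ^ (Multiplicative.toAdd (WithZero.unzero hx))

/-- The relative multiplicative height `H_K(x) = ∏_{v ∈ M_K} max {|x|_v^{n_v}, 1}`. -/
noncomputable def relHeight (x : K) : ℝ :=
  (∏ w : InfinitePlace K, max (w x ^ w.mult) 1) *
    ∏ᶠ v : HeightOneSpectrum (𝓞 K), max (vadicAbs K v x) 1

/-!
The height `H_K` is Mathlib's `Height.mulHeight₁`. Each finite local factor `max (|x|_v, 1)` is a
power of `N(v)`, so the finite part of the height is a positive integer `n`. Hence `H_K(x)` is an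
integer when every archimedean factor `max (|x|_w, 1)` is `1`, and also when every `|x|_w ≥ 1`,
since `H_K(x) = H_K(x⁻¹)`. In the remaining case `H_K(x) = max (|x|, |σ x|) · n`, so rationality
of `H_K(x)` makes `|x|` or `|σ x|` rational; then `x ∈ ℚ`, so `|x| = |σ x|`, which is impossible
in that case.
-/

lemma max_one_mul_max_one_of_min_le_of_le_max {α : Type*} [MulOneClass α] [LinearOrder α]
    {a b : α} (hmin : min a b ≤ 1) (hmax : 1 ≤ max a b) : max a 1 * max b 1 = max a b := by
  rcases le_total a b with h | h
  · rw [min_eq_left h] at hmin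
    rw [max_eq_right h] at hmax ⊢
    rw [max_eq_right hmin, max_eq_left hmax, one_mul]
  · rw [min_eq_right h] at hmin
    rw [max_eq_left h] at hmax ⊢
    rw [max_eq_left hmax, max_eq_right hmin, mul_one]

lemma exists_max_zpow_one_eq_pow {N : ℝ} (hN : 1 ≤ N) (k : ℤ) :
    ∃ m : ℕ, max (N ^ k) 1 = N ^ m := by
  obtain ⟨m, rfl | rfl⟩ := Int.eq_nat_or_neg k
  · exact ⟨m, by rw [zpow_natCast, max_eq_left (one_le_pow₀ hN)]⟩
  · exact ⟨0, by rw [pow_zero, max_eq_right (zpow_le_one_of_nonpos₀ hN (by simp))]⟩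

lemma apply_eq_self_of_abs_apply_eq_ratCast {F : Type*} [Field F] [CharZero F] (φ : F →+* ℝ)
    (σ : F ≃ₐ[ℚ] F) {y : F} {r : ℚ} (h : |φ y| = r) : σ y = y := by
  have hr : (0 : ℝ) ≤ r := h ▸ abs_nonneg _
  obtain ⟨s, rfl⟩ : ∃ s : ℚ, y = s := by
    rcases (abs_eq hr).1 h with h | h
    · exact ⟨r, φ.injective (by rw [h, map_ratCast])⟩
    · exact ⟨-r, φ.injective (by rw [h, map_ratCast, Rat.cast_neg])⟩
  exact map_ratCast σ s

variable {K}

lemma vadicAbs_eq_finitePlace_mk (v : HeightOneSpectrum (𝓞 K)) (x : K) :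
    vadicAbs K v x = FinitePlace.mk v x := by
  rw [FinitePlace.mk_apply, FinitePlace.norm_embedding', vadicAbs]
  split_ifs with hx
  · simp [hx]
  · rw [WithZeroMulInt.toNNReal_neg_apply _ hx]
    push_cast
    rfl

lemma relHeight_eq_mulHeight₁ (x : K) : relHeight K x = Height.mulHeight₁ x := by
  rw [relHeight, NumberField.mulHeight₁_eq,
    ← finprod_comp_equiv FinitePlace.equivHeightOneSpectrum.symm]
  congr 1
  · refine Finset.prod_congr rfl fun w _ => ?_
    rw [pow_left_monotoneOn.map_max (apply_nonneg w x) zero_le_one, one_pow]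
  · simp_rw [vadicAbs_eq_finitePlace_mk]
    rfl

lemma exists_max_finitePlace_one_eq_natCast (w : FinitePlace K) (x : K) :
    ∃ n : ℕ, max (w x) 1 = n := by
  rw [← FinitePlace.mk_maximalIdeal w, ← vadicAbs_eq_finitePlace_mk, vadicAbs]
  split_ifs
  · exact ⟨1, by simp⟩
  · have hN : (1 : ℝ) ≤ Ideal.absNorm (FinitePlace.maximalIdeal w).asIdeal :=
      mod_cast (NumberField.HeightOneSpectrum.one_lt_absNorm _).le
    obtain ⟨m, hm⟩ := exists_max_zpow_one_eq_pow hN _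
    exact ⟨_, hm.trans (Nat.cast_pow _ m).symm⟩

lemma exists_finprod_max_finitePlace_one_eq_natCast (x : K) :
    ∃ n : ℕ, ∏ᶠ w : FinitePlace K, max (w x) 1 = n := by
  choose n hn using fun w : FinitePlace K => exists_max_finitePlace_one_eq_natCast w x
  exact ⟨∏ᶠ w, n w, by rw [Nat.cast_finprod']; exact finprod_congr hn⟩

lemma exists_mulHeight₁_eq_natCast_of_forall_le_one {x : K}
    (h : ∀ w : InfinitePlace K, w x ≤ 1) : ∃ n : ℕ, Height.mulHeight₁ x = n := by
  obtain ⟨n, hn⟩ := exists_finprod_max_finitePlace_one_eq_natCast x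
  refine ⟨n, ?_⟩
  rw [NumberField.mulHeight₁_eq, hn,
    Finset.prod_eq_one fun w _ => by rw [max_eq_right (h w), one_pow], one_mul]

lemma exists_mulHeight₁_eq_natCast_of_forall_one_le {x : K}
    (h : ∀ w : InfinitePlace K, 1 ≤ w x) : ∃ n : ℕ, Height.mulHeight₁ x = n := by
  rw [← Height.mulHeight₁_inv]
  exact exists_mulHeight₁_eq_natCast_of_forall_le_one fun w => by
    rw [map_inv₀]
    exact inv_le_one_of_one_le₀ (h w)

lemma prod_infinitePlace_pow_mult {M : Type*} [CommMonoid M] (f : InfinitePlace K → M) :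
    ∏ w, f w ^ w.mult = ∏ ρ : K →+* ℂ, f (InfinitePlace.mk ρ) := by
  rw [← Finset.prod_fiberwise' Finset.univ InfinitePlace.mk f]
  refine Finset.prod_congr rfl fun w _ => ?_
  rw [Finset.prod_const, InfinitePlace.card_filter_mk_eq]

section RealQuadratic

variable {σ : K ≃ₐ[ℚ] K}

lemma ofRealHom_comp_ne_comp (φ : K →+* ℝ) (hσ : σ ≠ AlgEquiv.refl) :
    Complex.ofRealHom.comp φ ≠ (Complex.ofRealHom.comp φ).comp (σ : K →+* K) := by
  intro h
  apply hσ
  ext y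
  exact (φ.injective (Complex.ofReal_injective (RingHom.congr_fun h y))).symm

lemma univ_ringHom_eq_pair (h2 : Module.finrank ℚ K = 2) (φ : K →+* ℝ)
    (hσ : σ ≠ AlgEquiv.refl) :
    (Finset.univ : Finset (K →+* ℂ)) =
      {Complex.ofRealHom.comp φ, (Complex.ofRealHom.comp φ).comp (σ : K →+* K)} :=
  (Finset.eq_univ_of_card _ (by
    rw [Finset.card_pair (ofRealHom_comp_ne_comp φ hσ), Embeddings.card, h2])).symm

lemma infinitePlace_apply_eq_or (h2 : Module.finrank ℚ K = 2) (φ : K →+* ℝ)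
    (hσ : σ ≠ AlgEquiv.refl) (w : InfinitePlace K) (x : K) :
    w x = |φ x| ∨ w x = |φ (σ x)| := by
  have hw := Finset.mem_univ w.embedding
  rw [univ_ringHom_eq_pair h2 φ hσ, Finset.mem_insert, Finset.mem_singleton] at hw
  rw [← w.norm_embedding_eq]
  rcases hw with hw | hw <;> rw [hw] <;> simp

lemma mulHeight₁_eq_max_mul_max_mul_finprod (h2 : Module.finrank ℚ K = 2) (φ : K →+* ℝ)
    (hσ : σ ≠ AlgEquiv.refl) (x : K) :
    Height.mulHeight₁ x =
      max |φ x| 1 * max |φ (σ x)| 1 * ∏ᶠ w : FinitePlace K, max (w x) 1 := by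
  rw [NumberField.mulHeight₁_eq, prod_infinitePlace_pow_mult fun w => max (w x) 1,
    univ_ringHom_eq_pair h2 φ hσ, Finset.prod_pair (ofRealHom_comp_ne_comp φ hσ)]
  simp [InfinitePlace.apply]

lemma exists_mulHeight₁_eq_natCast_of_max_le_one_or_one_le_min (h2 : Module.finrank ℚ K = 2)
    (φ : K →+* ℝ) (hσ : σ ≠ AlgEquiv.refl) {x : K}
    (h : max |φ x| |φ (σ x)| ≤ 1 ∨ 1 ≤ min |φ x| |φ (σ x)|) :
    ∃ n : ℕ, Height.mulHeight₁ x = n := by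
  rcases h with h | h
  · refine exists_mulHeight₁_eq_natCast_of_forall_le_one fun w => ?_
    rcases infinitePlace_apply_eq_or h2 φ hσ w x with hw | hw <;> rw [hw]
    exacts [(le_max_left _ _).trans h, (le_max_right _ _).trans h]
  · refine exists_mulHeight₁_eq_natCast_of_forall_one_le fun w => ?_
    rcases infinitePlace_apply_eq_or h2 φ hσ w x with hw | hw <;> rw [hw]
    exacts [h.trans (min_le_left _ _), h.trans (min_le_right _ _)]

lemma max_le_one_or_one_le_min_of_mulHeight₁_eq_ratCast (h2 : Module.finrank ℚ K = 2)
    (φ : K →+* ℝ) (hσ : σ ≠ AlgEquiv.refl) {x : K} {q : ℚ} (hq : Height.mulHeight₁ x = q) :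
    max |φ x| |φ (σ x)| ≤ 1 ∨ 1 ≤ min |φ x| |φ (σ x)| := by
  by_contra hmixed
  rw [not_or, not_le, not_le] at hmixed
  obtain ⟨n, hn⟩ := exists_finprod_max_finitePlace_one_eq_natCast x
  have hn0 : (n : ℝ) ≠ 0 := by
    rw [← hn]
    exact (one_le_finprod fun _ => le_max_right _ _).trans_lt' zero_lt_one |>.ne'
  rw [mulHeight₁_eq_max_mul_max_mul_finprod h2 φ hσ, hn,
    max_one_mul_max_one_of_min_le_of_le_max hmixed.2.le hmixed.1.le] at hq
  have hσx : σ x = x := by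
    have hrat : max |φ x| |φ (σ x)| = ((q / n : ℚ) : ℝ) := by
      rw [Rat.cast_div, Rat.cast_natCast, eq_div_iff hn0, hq]
    rcases max_choice |φ x| |φ (σ x)| with hmax | hmax <;> rw [hmax] at hrat
    · exact apply_eq_self_of_abs_apply_eq_ratCast φ σ hrat
    · exact σ.injective (apply_eq_self_of_abs_apply_eq_ratCast φ σ hrat)
  rw [hσx, max_self, min_self] at hmixed
  exact hmixed.1.not_gt hmixed.2

end RealQuadratic

theorem height_real_quadratic_rational_iff_general
    (h2 : Module.finrank ℚ K = 2)
    (φ : K →+* ℝ) (σ : K ≃ₐ[ℚ] K) (hσ : σ ≠ AlgEquiv.refl)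
    (x : K) :
    ((∃ q : ℚ, relHeight K x = q) ↔
      (max |φ x| |φ (σ x)| ≤ 1 ∨ 1 ≤ min |φ x| |φ (σ x)|)) ∧
    ((∃ q : ℚ, relHeight K x = q) → ∃ m : ℤ, relHeight K x = m) := by
  simp only [relHeight_eq_mulHeight₁]
  have classify : (∃ q : ℚ, Height.mulHeight₁ x = q) →
      max |φ x| |φ (σ x)| ≤ 1 ∨ 1 ≤ min |φ x| |φ (σ x)| := fun ⟨q, hq⟩ =>
    max_le_one_or_one_le_min_of_mulHeight₁_eq_ratCast h2 φ hσ hq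
  refine ⟨⟨classify, fun h => ?_⟩, fun h => ?_⟩
  · obtain ⟨n, hn⟩ := exists_mulHeight₁_eq_natCast_of_max_le_one_or_one_le_min h2 φ hσ h
    exact ⟨n, by rw [hn, Rat.cast_natCast]⟩
  · obtain ⟨n, hn⟩ :=
      exists_mulHeight₁_eq_natCast_of_max_le_one_or_one_le_min h2 φ hσ (classify h)
    exact ⟨n, by rw [hn, Int.cast_natCast]⟩

theorem height_real_quadratic_rational_iff
    (h2 : Module.finrank ℚ K = 2)
    (hreal : ∀ w : InfinitePlace K, w.IsReal)
    (φ : K →+* ℝ) (σ : K ≃ₐ[ℚ] K) (hσ : σ ≠ AlgEquiv.refl)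
    (x : K) (hx : x ≠ 0) :
    ((∃ q : ℚ, relHeight K x = q) ↔
      (max |φ x| |φ (σ x)| ≤ 1 ∨ 1 ≤ min |φ x| |φ (σ x)|)) ∧
    ((∃ q : ℚ, relHeight K x = q) → ∃ m : ℤ, relHeight K x = m) :=
  height_real_quadratic_rational_iff_general h2 φ σ hσ x
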